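/- arXiv:1401.5419 — 2 statements merged into one kernel-verified Lean document; each statement's English description precedes it below -/
import Mathlib

section
/- Let I₀(h) and I₂(h) be real-analytic functions on (0,∞) satisfying the Picard-Fuchs system I₀ = (4/3) h I₀' + (1/3) I₂' and I₂ = (4/15) h I₀' + (4/5 h + 4/15) I₂'. Then I₀ satisfies the second-order ODE 4h(4h+1) I₀'' = -3 I₀ on (0,∞). -/
/-- If I₀, I₂ are C² on (0,∞) and satisfy the Picard-Fuchs system
I₀ = (4/3) h I₀' + (1/3) I₂',  I₂ = (4/15) h I₀' + (4/5 h + 4/15) I₂',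
then 4h(4h+1) I₀'' = -3 I₀ on (0,∞). -/
theorem I0_second_order_ODE (I₀ I₂ : ℝ → ℝ)
    (hI₀ : ContDiffOn ℝ 2 I₀ (Set.Ioi 0)) (hI₂ : ContDiffOn ℝ 2 I₂ (Set.Ioi 0))
    (h1 : ∀ h ∈ Set.Ioi (0:ℝ),
      I₀ h = (4/3) * h * deriv I₀ h + (1/3) * deriv I₂ h)
    (h2 : ∀ h ∈ Set.Ioi (0:ℝ),
      I₂ h = (4/15) * h * deriv I₀ h + ((4/5) * h + 4/15) * deriv I₂ h) :
    ∀ h ∈ Set.Ioi (0:ℝ),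
      4 * h * (4*h + 1) * deriv (deriv I₀) h = -3 * I₀ h := by
  intro h0 hh
  have hmem : Set.Ioi (0:ℝ) ∈ nhds h0 := isOpen_Ioi.mem_nhds hh
  set a := deriv I₀ with ha_def
  set b := deriv I₂ with hb_def
  -- deriv I₀ and deriv I₂ are C¹ on Ioi 0
  have hda : ContDiffOn ℝ 1 a (Set.Ioi 0) :=
    hI₀.deriv_of_isOpen isOpen_Ioi (by norm_num)
  have hdb : ContDiffOn ℝ 1 b (Set.Ioi 0) :=
    hI₂.deriv_of_isOpen isOpen_Ioi (by norm_num)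
  have hDa : DifferentiableAt ℝ a h0 :=
    (hda.differentiableOn (by norm_num)).differentiableAt hmem
  have hDb : DifferentiableAt ℝ b h0 :=
    (hdb.differentiableOn (by norm_num)).differentiableAt hmem
  have haH : HasDerivAt a (deriv a h0) h0 := hDa.hasDerivAt
  have hbH : HasDerivAt b (deriv b h0) h0 := hDb.hasDerivAt
  -- derivative of I₀ at h0 via eq1
  have hg1 : HasDerivAt (fun x => (4/3) * x * a x + (1/3) * b x)
      ((4/3) * a h0 + (4/3) * h0 * deriv a h0 + (1/3) * deriv b h0) h0 := by
    have h1' : HasDerivAt (fun x => (4/3) * x) (4/3) h0 := by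
      simpa using (hasDerivAt_id h0).const_mul (4/3)
    exact ((h1'.mul haH).add (hbH.const_mul (1/3))).congr_deriv (by ring)
  have hg2 : HasDerivAt (fun x => (4/15) * x * a x + ((4/5) * x + 4/15) * b x)
      ((4/15) * a h0 + (4/15) * h0 * deriv a h0 + (4/5) * b h0
        + ((4/5) * h0 + 4/15) * deriv b h0) h0 := by
    have hl : HasDerivAt (fun x => (4/15) * x) (4/15) h0 := by
      simpa using (hasDerivAt_id h0).const_mul (4/15)
    have hl2 : HasDerivAt (fun x => (4/5) * x + 4/15) (4/5) h0 := by
      simpa using ((hasDerivAt_id h0).const_mul (4/5)).add_const (4/15)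
    exact ((hl.mul haH).add (hl2.mul hbH)).congr_deriv (by ring)
  have e1 : a h0 = (4/3) * a h0 + (4/3) * h0 * deriv a h0 + (1/3) * deriv b h0 := by
    have heq : I₀ =ᶠ[nhds h0] (fun x => (4/3) * x * a x + (1/3) * b x) :=
      Filter.eventually_of_mem hmem h1
    have h := heq.deriv_eq
    rw [hg1.deriv] at h
    exact h
  have e2 : b h0 = (4/15) * a h0 + (4/15) * h0 * deriv a h0 + (4/5) * b h0
      + ((4/5) * h0 + 4/15) * deriv b h0 := by
    have heq : I₂ =ᶠ[nhds h0] (fun x => (4/15) * x * a x + ((4/5) * x + 4/15) * b x) :=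
      Filter.eventually_of_mem hmem h2
    have h := heq.deriv_eq
    rw [hg2.deriv] at h
    exact h
  have e0 := h1 h0 hh
  linear_combination (3:ℝ) * e0 + (-(12*h0) - 4) * e1 + 5 * e2
end

section
/- For every h < -1/4, the real level set {(x,y) ∈ ℝ² : y²/2 - x²/2 + x⁴/4 = h} is empty, and for -1/4 < h < 0 it consists of exactly two disjoint closed ovals (connected components), while for h > 0 it is a single closed oval. -/
open Set

/-- Union of the two graphs y = ±√(g x) over [l,u]. -/
noncomputable def arcU (g : ℝ → ℝ) (l u : ℝ) : Set (ℝ × ℝ) :=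
  (fun x => (x, Real.sqrt (g x))) '' Set.Icc l u ∪
    (fun x => (x, -Real.sqrt (g x))) '' Set.Icc l u

lemma arcU_conn (g : ℝ → ℝ) (hg : Continuous g) {l u : ℝ} (hlu : l ≤ u) (hl : g l = 0) :
    IsConnected (arcU g l u) := by
  apply IsConnected.union
  · exact ⟨(l, 0), ⟨l, ⟨le_refl l, hlu⟩, by simp [hl]⟩, ⟨l, ⟨le_refl l, hlu⟩, by simp [hl]⟩⟩
  · exact (isConnected_Icc hlu).image _
      (Continuous.continuousOn (continuous_id.prodMk (Real.continuous_sqrt.comp hg)))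
  · exact (isConnected_Icc hlu).image _
      (Continuous.continuousOn (continuous_id.prodMk (Real.continuous_sqrt.comp hg).neg))

lemma arcU_compact (g : ℝ → ℝ) (hg : Continuous g) (l u : ℝ) :
    IsCompact (arcU g l u) := by
  apply IsCompact.union
  · exact isCompact_Icc.image (continuous_id.prodMk (Real.continuous_sqrt.comp hg))
  · exact isCompact_Icc.image (continuous_id.prodMk (Real.continuous_sqrt.comp hg).neg)

lemma arcU_eq (g : ℝ → ℝ) {l u : ℝ} (hg : ∀ x ∈ Set.Icc l u, 0 ≤ g x) :
    arcU g l u = {p : ℝ × ℝ | p.2 ^ 2 = g p.1 ∧ p.1 ∈ Set.Icc l u} := by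
  ext ⟨x, y⟩
  simp only [arcU, Set.mem_union, Set.mem_image, Set.mem_setOf_eq, Prod.mk.injEq]
  constructor
  · rintro (⟨t, ht, rfl, rfl⟩ | ⟨t, ht, rfl, rfl⟩)
    · exact ⟨Real.sq_sqrt (hg t ht), ht⟩
    · exact ⟨by rw [neg_sq, Real.sq_sqrt (hg t ht)], ht⟩
  · rintro ⟨hy, hx⟩
    rcases le_or_gt 0 y with hy0 | hy0
    · exact Or.inl ⟨x, hx, rfl, by rw [← hy, Real.sqrt_sq hy0]⟩
    · exact Or.inr ⟨x, hx, rfl, by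
        rw [← hy, Real.sqrt_sq_eq_abs, abs_of_neg hy0, neg_neg]⟩

set_option maxHeartbeats 1000000 in
/-- The real level set {H = h} of H(x,y) = y²/2 - x²/2 + x⁴/4 is:
empty for h < -1/4; exactly two disjoint compact ovals (one in x > 0, one in
x < 0) for -1/4 < h < 0; and a single compact oval for h > 0. -/
theorem level_set_topology :
    (∀ h : ℝ, h < -(1/4) →
      {p : ℝ × ℝ | p.2^2/2 - p.1^2/2 + p.1^4/4 = h} = ∅) ∧
    (∀ h : ℝ, -(1/4) < h → h < 0 →
      ∃ A B : Set (ℝ × ℝ),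
        IsConnected A ∧ IsConnected B ∧ IsCompact A ∧ IsCompact B ∧
        Disjoint A B ∧
        A ⊆ {p | 0 < p.1} ∧ B ⊆ {p | p.1 < 0} ∧
        A ∪ B = {p : ℝ × ℝ | p.2^2/2 - p.1^2/2 + p.1^4/4 = h} ∧
        ¬ IsConnected {p : ℝ × ℝ | p.2^2/2 - p.1^2/2 + p.1^4/4 = h}) ∧
    (∀ h : ℝ, 0 < h →
      IsConnected {p : ℝ × ℝ | p.2^2/2 - p.1^2/2 + p.1^4/4 = h} ∧
      IsCompact {p : ℝ × ℝ | p.2^2/2 - p.1^2/2 + p.1^4/4 = h}) := by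
  refine ⟨?_, ?_, ?_⟩
  · -- empty for h < -1/4
    intro h hh
    rw [Set.eq_empty_iff_forall_notMem]
    intro p hp
    simp only [Set.mem_setOf_eq] at hp
    nlinarith [sq_nonneg p.2, sq_nonneg (p.1 ^ 2 - 1)]
  · -- two ovals for -1/4 < h < 0
    intro h h1 h2
    set g : ℝ → ℝ := fun x => 2 * h + x ^ 2 - x ^ 4 / 2 with hgdef
    have hgc : Continuous g := by fun_prop
    set s : ℝ := Real.sqrt (1 + 4 * h) with hsdef
    have hs2 : s ^ 2 = 1 + 4 * h := Real.sq_sqrt (by linarith)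
    have hs0 : 0 ≤ s := Real.sqrt_nonneg _
    have hsp : 0 < s := Real.sqrt_pos.mpr (by linarith)
    have hs1 : s < 1 := by nlinarith [sq_nonneg (s - 1)]
    set b : ℝ := Real.sqrt (1 - s) with hbdef
    set a : ℝ := Real.sqrt (1 + s) with hadef
    have hb2 : b ^ 2 = 1 - s := Real.sq_sqrt (by linarith)
    have ha2 : a ^ 2 = 1 + s := Real.sq_sqrt (by linarith)
    have hb0 : 0 ≤ b := Real.sqrt_nonneg _
    have ha0 : 0 ≤ a := Real.sqrt_nonneg _
    have hbp : 0 < b := Real.sqrt_pos.mpr (by linarith)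
    have hap : 0 < a := Real.sqrt_pos.mpr (by linarith)
    have hba : b ≤ a := Real.sqrt_le_sqrt (by linarith)
    have hb4 : b ^ 4 = 1 - 2 * s + s ^ 2 := by
      rw [show b ^ 4 = (b ^ 2) ^ 2 by ring, hb2]; ring
    have ha4 : a ^ 4 = 1 + 2 * s + s ^ 2 := by
      rw [show a ^ 4 = (a ^ 2) ^ 2 by ring, ha2]; ring
    have hga : g a = 0 := by simp only [hgdef]; linarith
    have hgb : g b = 0 := by simp only [hgdef]; linarith
    have hgna : g (-a) = 0 := by simp only [hgdef]; ring_nf; ring_nf at hga; linarith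
    -- g ≥ 0 on [b,a] and on [-a,-b]
    have hposA : ∀ x ∈ Set.Icc b a, 0 ≤ g x := by
      rintro x ⟨hx1, hx2⟩
      have hx0 : 0 ≤ x := le_trans hb0 hx1
      have hx2sq : x ^ 2 ≤ a ^ 2 := by nlinarith [mul_le_mul hx2 hx2 hx0 ha0]
      have hx1sq : b ^ 2 ≤ x ^ 2 := by nlinarith [mul_le_mul hx1 hx1 hb0 hx0]
      simp only [hgdef]
      nlinarith [mul_nonneg (show (0:ℝ) ≤ s - (x ^ 2 - 1) by linarith)
        (show (0:ℝ) ≤ s + (x ^ 2 - 1) by linarith)]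
    have hposB : ∀ x ∈ Set.Icc (-a) (-b), 0 ≤ g x := by
      rintro x ⟨hx1, hx2⟩
      have hx0 : 0 ≤ -x := by linarith
      have h1' : -x ≤ a := by linarith
      have h2' : b ≤ -x := by linarith
      have hx2sq : x ^ 2 ≤ a ^ 2 := by nlinarith [mul_le_mul h1' h1' hx0 ha0]
      have hx1sq : b ^ 2 ≤ x ^ 2 := by nlinarith [mul_le_mul h2' h2' hb0 hx0]
      simp only [hgdef]
      nlinarith [mul_nonneg (show (0:ℝ) ≤ s - (x ^ 2 - 1) by linarith)
        (show (0:ℝ) ≤ s + (x ^ 2 - 1) by linarith)]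
    refine ⟨arcU g b a, arcU g (-a) (-b), ?_, ?_, ?_, ?_, ?_, ?_, ?_, ?_, ?_⟩
    · exact arcU_conn g hgc hba hgb
    · exact arcU_conn g hgc (by linarith) hgna
    · exact arcU_compact g hgc _ _
    · exact arcU_compact g hgc _ _
    · rw [arcU_eq g hposA, arcU_eq g hposB]
      rw [Set.disjoint_left]
      rintro p ⟨_, hp1, _⟩ ⟨_, _, hp2⟩
      linarith
    · rw [arcU_eq g hposA]
      rintro p ⟨_, hp1, _⟩
      simp only [Set.mem_setOf_eq]
      linarith
    · rw [arcU_eq g hposB]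
      rintro p ⟨_, _, hp2⟩
      simp only [Set.mem_setOf_eq]
      linarith
    · rw [arcU_eq g hposA, arcU_eq g hposB]
      ext ⟨x, y⟩
      simp only [Set.mem_union, Set.mem_setOf_eq, Set.mem_Icc]
      constructor
      · rintro (⟨hy, _, _⟩ | ⟨hy, _, _⟩) <;> (simp only [hgdef] at hy; linarith)
      · intro hp
        have hy : y ^ 2 = g x := by simp only [hgdef]; linarith
        have hgx : 0 ≤ g x := hy ▸ sq_nonneg y
        simp only [hgdef] at hgx
        have hxsq1 : b ^ 2 ≤ x ^ 2 := by nlinarith [sq_nonneg (x ^ 2 - 1 + s)]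
        have hxsq2 : x ^ 2 ≤ a ^ 2 := by nlinarith [sq_nonneg (x ^ 2 - 1 - s)]
        rcases le_or_gt 0 x with hx0 | hx0
        · exact Or.inl ⟨hy, by nlinarith, by nlinarith⟩
        · exact Or.inr ⟨hy, by nlinarith, by nlinarith⟩
    · -- not connected
      rintro ⟨-, hpc⟩
      have hmemA : ((a : ℝ), (0 : ℝ)) ∈ {p : ℝ × ℝ | p.2^2/2 - p.1^2/2 + p.1^4/4 = h} := by
        simp only [Set.mem_setOf_eq]; linarith
      have hmemB : ((-a : ℝ), (0 : ℝ)) ∈ {p : ℝ × ℝ | p.2^2/2 - p.1^2/2 + p.1^4/4 = h} := by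
        simp only [Set.mem_setOf_eq]; ring_nf; nlinarith
      obtain ⟨p, hpS, hp1, hp2⟩ := hpc {p : ℝ × ℝ | 0 < p.1} {p : ℝ × ℝ | p.1 < 0}
        (isOpen_lt continuous_const continuous_fst)
        (isOpen_lt continuous_fst continuous_const)
        (by
          rintro ⟨x, y⟩ hp
          simp only [Set.mem_setOf_eq] at hp
          have hgx : 0 ≤ 2 * h + x ^ 2 - x ^ 4 / 2 := by nlinarith [sq_nonneg y]
          have hxsq1 : b ^ 2 ≤ x ^ 2 := by nlinarith [sq_nonneg (x ^ 2 - 1 + s)]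
          rcases le_or_gt 0 x with hx0 | hx0
          · exact Or.inl (show (0:ℝ) < x by nlinarith)
          · exact Or.inr hx0)
        ⟨(a, 0), hmemA, show (0:ℝ) < a from hap⟩
        ⟨(-a, 0), hmemB, show (-a:ℝ) < 0 by linarith⟩
      simp only [Set.mem_setOf_eq] at hp1 hp2
      linarith
  · -- single oval for h > 0
    intro h hh
    set g : ℝ → ℝ := fun x => 2 * h + x ^ 2 - x ^ 4 / 2 with hgdef
    have hgc : Continuous g := by fun_prop
    set s : ℝ := Real.sqrt (1 + 4 * h) with hsdef
    have hs2 : s ^ 2 = 1 + 4 * h := Real.sq_sqrt (by linarith)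
    have hs0 : 0 ≤ s := Real.sqrt_nonneg _
    have hs1 : 1 ≤ s := by nlinarith [sq_nonneg (s - 1), sq_nonneg (s + 1)]
    set a : ℝ := Real.sqrt (1 + s) with hadef
    have ha2 : a ^ 2 = 1 + s := Real.sq_sqrt (by linarith)
    have ha0 : 0 ≤ a := Real.sqrt_nonneg _
    have ha4 : a ^ 4 = 1 + 2 * s + s ^ 2 := by
      rw [show a ^ 4 = (a ^ 2) ^ 2 by ring, ha2]; ring
    have hga : g a = 0 := by simp only [hgdef]; linarith
    have hgna : g (-a) = 0 := by simp only [hgdef]; ring_nf; ring_nf at hga; linarith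
    have hpos : ∀ x ∈ Set.Icc (-a) a, 0 ≤ g x := by
      rintro x ⟨hx1, hx2⟩
      have hxsq : x ^ 2 ≤ a ^ 2 := by
        nlinarith [mul_nonneg (show (0:ℝ) ≤ a - x by linarith)
          (show (0:ℝ) ≤ a + x by linarith)]
      simp only [hgdef]
      nlinarith [mul_nonneg (show (0:ℝ) ≤ s - (x ^ 2 - 1) by linarith)
        (show (0:ℝ) ≤ s + (x ^ 2 - 1) by nlinarith)]
    have hSeq : {p : ℝ × ℝ | p.2^2/2 - p.1^2/2 + p.1^4/4 = h} = arcU g (-a) a := by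
      rw [arcU_eq g hpos]
      ext ⟨x, y⟩
      simp only [Set.mem_setOf_eq, Set.mem_Icc]
      constructor
      · intro hp
        have hy : y ^ 2 = g x := by simp only [hgdef]; linarith
        have hgx : 0 ≤ g x := hy ▸ sq_nonneg y
        simp only [hgdef] at hgx
        have hxsq : x ^ 2 ≤ a ^ 2 := by nlinarith [sq_nonneg (x ^ 2 - 1 - s)]
        refine ⟨hy, ?_, ?_⟩ <;> nlinarith [sq_nonneg (x + a), sq_nonneg (x - a)]
      · rintro ⟨hy, _, _⟩
        simp only [hgdef] at hy; linarith
    rw [hSeq]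
    exact ⟨arcU_conn g hgc (by linarith) hgna, arcU_compact g hgc _ _⟩
end
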